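/- arXiv:math/0205162 — 3 statements merged into one kernel-verified Lean document; each statement's English description precedes it below -/
import Mathlib

section
/- Let R be a commutative ring and X an R-module with an alternating bilinear form ⟨-,-⟩ : X × X → R (i.e., ⟨x,x⟩ = 0 for all x). Then X with operations x ▷ y = x + ⟨x,y⟩y and x ⊴ y = x − ⟨x,y⟩y satisfies the three quandle axioms. -/
/-!
The right translation `· ▷ y` is the transvection `x ↦ x + ⟨x, y⟩ y`, and `· ⊴ y` is the
transvection along `y` with the opposite linear form; since `⟨y, y⟩ = 0` the two are mutually
inverse. Transvections along a vector `z` preserve an alternating form, and an isometry `φ`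
conjugates the transvection along `y` into the one along `φ y`; applied to `φ = · ▷ z` this is
self-distributivity.
-/

namespace LinearMap.IsAlt

variable {R X : Type*} [CommRing R] [AddCommGroup X] [Module R X] {B : X →ₗ[R] X →ₗ[R] R}

theorem transvection_comp_transvection_neg (hB : B.IsAlt) (y : X) :
    transvection (B.flip y) y ∘ₗ transvection (-B.flip y) y = id := by
  rw [transvection.comp_of_right_eq (f := B.flip y) (hB.self_eq_zero y), add_neg_cancel,
    transvection.of_left_eq_zero]

theorem transvection_neg_comp_transvection (hB : B.IsAlt) (y : X) :
    transvection (-B.flip y) y ∘ₗ transvection (B.flip y) y = id := by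
  rw [transvection.comp_of_right_eq (f := -B.flip y) (by simpa using hB.self_eq_zero y),
    neg_add_cancel, transvection.of_left_eq_zero]

theorem apply_transvection_transvection (hB : B.IsAlt) (x y z : X) :
    B (transvection (B.flip z) z x) (transvection (B.flip z) z y) = B x y := by
  simp only [transvection.apply, flip_apply, map_add, map_smul, add_apply, smul_apply,
    smul_eq_mul, hB.self_eq_zero, ← hB.neg z y]
  ring

theorem transvection_transvection_apply_transvection (hB : B.IsAlt) (x y z : X) :
    transvection (B.flip (transvection (B.flip z) z y)) (transvection (B.flip z) z y)
        (transvection (B.flip z) z x) =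
      transvection (B.flip z) z (transvection (B.flip y) y x) := by
  rw [transvection.apply, flip_apply, hB.apply_transvection_transvection,
    transvection.apply (B.flip y) y x, map_add, map_smul, flip_apply]

end LinearMap.IsAlt

open LinearMap in
theorem alternating_quandle_axioms (R : Type*) [CommRing R]
    (X : Type*) [AddCommGroup X] [Module R X]
    (B : X →ₗ[R] X →ₗ[R] R) (halt : ∀ v : X, B v v = 0)
    (tr br : X → X → X)
    (htr : ∀ x y : X, tr x y = x + B x y • y)
    (hbr : ∀ x y : X, br x y = x - B x y • y) :
    (∀ x : X, tr x x = x) ∧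
    (∀ x y : X, br (tr x y) y = x ∧ tr (br x y) y = x) ∧
    (∀ x y z : X, tr (tr x y) z = tr (tr x z) (tr y z)) := by
  have hB : B.IsAlt := halt
  have htr' (x y : X) : tr x y = transvection (B.flip y) y x := htr x y
  have hbr' (x y : X) : br x y = transvection (-B.flip y) y x := by
    rw [hbr, transvection.apply, LinearMap.neg_apply, neg_smul, flip_apply, sub_eq_add_neg]
  refine ⟨fun x => ?_, fun x y => ⟨?_, ?_⟩, fun x y z => ?_⟩
  · rw [htr, halt, zero_smul, add_zero]
  · rw [htr', hbr', ← comp_apply, hB.transvection_neg_comp_transvection, id_apply]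
  · rw [htr', hbr', ← comp_apply, hB.transvection_comp_transvection_neg, id_apply]
  · simp only [htr', hB.transvection_transvection_apply_transvection]
end

section
/- The reduced alternating quandle of an R-module X with alternating bilinear form, i.e., the quotient of X by the {±1}-scalar action with operations induced from x ▷ y = x + ⟨x,y⟩y and x ⊴ y = x − ⟨x,y⟩y, satisfies the three quandle axioms. -/
/-!
The operations `x ▷ y = x + ⟨x,y⟩y` and `x ⊴ y = x - ⟨x,y⟩y` already satisfy the quandle axioms
on `X` itself, exactly and not merely up to sign, so they hold in the quotient by `x ∼ -x`.
Idempotence and invertibility only use `⟨y,y⟩ = 0`; self-distributivity comes from the fact that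
`· ▷ z` preserves the form, `⟨x ▷ z, y ▷ z⟩ = ⟨x,y⟩`, which is where skew-symmetry enters.
-/

/-- The {±1}-orbit equivalence: `x ∼ y` iff `y = x` or `y = -x`. -/
def signRel {X : Type*} [AddCommGroup X] (x y : X) : Prop := y = x ∨ y = -x

namespace LinearMap

variable {R X : Type*} [CommRing R] [AddCommGroup X] [Module R X] (B : X →ₗ[R] X →ₗ[R] R)

def altAct (x y : X) : X := x + B x y • y

def altActInv (x y : X) : X := x - B x y • y

variable {B}

theorem altAct_self {x : X} (hx : B x x = 0) : B.altAct x x = x := by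
  simp [altAct, hx]

theorem altActInv_altAct {y : X} (hy : B y y = 0) (x : X) : B.altActInv (B.altAct x y) y = x := by
  simp [altAct, altActInv, hy]

theorem altAct_altActInv {y : X} (hy : B y y = 0) (x : X) : B.altAct (B.altActInv x y) y = x := by
  simp [altAct, altActInv, hy]

theorem IsAlt.apply_altAct_altAct (hB : B.IsAlt) (x y z : X) :
    B (B.altAct x z) (B.altAct y z) = B x y := by
  simp only [altAct, map_add, map_smul, add_apply, smul_apply, hB.self_eq_zero, smul_eq_mul,
    mul_zero, add_zero, ← hB.neg z y]
  ring

theorem IsAlt.altAct_altAct (hB : B.IsAlt) (x y z : X) :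
    B.altAct (B.altAct x y) z = B.altAct (B.altAct x z) (B.altAct y z) := by
  conv_rhs => rw [altAct, hB.apply_altAct_altAct]
  simp only [altAct, map_add, map_smul, add_apply, smul_apply, smul_eq_mul]
  module

end LinearMap

theorem reduced_alternating_quandle_axioms (R : Type*) [CommRing R]
    (X : Type*) [AddCommGroup X] [Module R X]
    (B : X →ₗ[R] X →ₗ[R] R) (halt : ∀ v : X, B v v = 0)
    (tr br : Quot (signRel (X := X)) → Quot (signRel (X := X)) → Quot (signRel (X := X)))
    (htr : ∀ x y : X, tr (Quot.mk _ x) (Quot.mk _ y) = Quot.mk _ (x + B x y • y))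
    (hbr : ∀ x y : X, br (Quot.mk _ x) (Quot.mk _ y) = Quot.mk _ (x - B x y • y)) :
    (∀ q : Quot (signRel (X := X)), tr q q = q) ∧
    (∀ q r : Quot (signRel (X := X)), br (tr q r) r = q ∧ tr (br q r) r = q) ∧
    (∀ q r s : Quot (signRel (X := X)), tr (tr q r) s = tr (tr q s) (tr r s)) := by
  have htr' : ∀ x y : X, tr (Quot.mk _ x) (Quot.mk _ y) = Quot.mk _ (B.altAct x y) := htr
  have hbr' : ∀ x y : X, br (Quot.mk _ x) (Quot.mk _ y) = Quot.mk _ (B.altActInv x y) := hbr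
  refine ⟨Quot.ind fun x => ?_, Quot.ind fun x => Quot.ind fun y => ⟨?_, ?_⟩,
    Quot.ind fun x => Quot.ind fun y => Quot.ind fun z => ?_⟩
  · rw [htr', LinearMap.altAct_self (halt x)]
  · rw [htr', hbr', LinearMap.altActInv_altAct (halt y)]
  · rw [hbr', htr', LinearMap.altAct_altActInv (halt y)]
  · rw [htr', htr', htr', htr', htr', LinearMap.IsAlt.altAct_altAct halt]
end

section
/- The set Q = {y/x : x, y ∈ ℤ, gcd(x,y) = 1} ∪ {I} (slopes up to simultaneous sign, plus a distinguished element I), with operations (v/u) ▷ (y/x) = (v − vxy + uy²)/(u + uxy − vx²), (v/u) ⊴ (y/x) = (v + vxy − uy²)/(u − uxy + vx²), I ▷ q = I, q ▷ I = q, I ⊴ q = I, q ⊴ I = q, satisfies the three quandle axioms. -/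
/-- Coprime pairs of integers, representing slopes on the torus. -/
def CoprimePair : Type := {p : ℤ × ℤ // IsCoprime p.1 p.2}

/-- Two coprime pairs are identified when they agree up to simultaneous sign change. -/
def slopeRel (p q : CoprimePair) : Prop :=
  q.1 = p.1 ∨ q.1 = (-p.1.1, -p.1.2)

/-- Slopes on the torus: coprime pairs up to sign. -/
def Slope : Type := Quot slopeRel

/-- The Dehn quandle of the torus: slopes together with the class `I` (= `none`)
of contractible simple closed curves. -/
def TorusDehn : Type := Option Slope

/-!
On the torus the Dehn twist along a curve of primitive homology class `q` acts on homology by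
the transvection `p ↦ p + ⟨p, q⟩ q`, where `⟨p, q⟩ = p₁ q₂ - p₂ q₁` is the algebraic
intersection number; `▷` and `⊴` are this transvection and its inverse. A transvection
preserves `⟨-, -⟩`, so it preserves primitivity, and conjugating the transvection along `q` by
the one along `r` gives the transvection along `r ▷ q`: this is self-distributivity. The
formula is linear in `p` and quadratic in `q`, so it descends to slopes.
-/

open Quandles

section Transvection

variable {R : Type*} [CommRing R]

def intersectionForm (p q : R × R) : R := p.1 * q.2 - p.2 * q.1

theorem intersectionForm_self (p : R × R) : intersectionForm p p = 0 := by
  unfold intersectionForm; ring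

theorem intersectionForm_neg_right (p q : R × R) :
    intersectionForm p (-q) = -intersectionForm p q := by
  unfold intersectionForm; simp only [Prod.fst_neg, Prod.snd_neg]; ring

def transvection (c : R) (q : R × R) : (R × R) →ₗ[R] R × R where
  toFun p := p + (c * intersectionForm p q) • q
  map_add' p p' := by ext <;> simp [intersectionForm] <;> ring
  map_smul' a p := by ext <;> simp [intersectionForm] <;> ring

theorem transvection_apply (c : R) (q p : R × R) :
    transvection c q p = p + (c * intersectionForm p q) • q := rfl

theorem transvection_mk (c u v x y : R) :
    transvection c (x, y) (u, v) = (u + c * (u * y - v * x) * x, v + c * (u * y - v * x) * y) := by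
  simp only [transvection_apply, intersectionForm, Prod.mk_add_mk, Prod.smul_mk, smul_eq_mul]

theorem transvection_self (c : R) (q : R × R) : transvection c q q = q := by
  simp [transvection_apply, intersectionForm_self]

theorem intersectionForm_transvection (c : R) (r p q : R × R) :
    intersectionForm (transvection c r p) (transvection c r q) = intersectionForm p q := by
  simp only [transvection_apply, intersectionForm, Prod.fst_add, Prod.snd_add, Prod.smul_fst,
    Prod.smul_snd, smul_eq_mul]
  ring

theorem transvection_neg_transvection (c : R) (q p : R × R) :
    transvection (-c) q (transvection c q p) = p := by
  have hω : intersectionForm (transvection c q p) q = intersectionForm p q := by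
    simpa only [transvection_self] using intersectionForm_transvection c q p q
  rw [transvection_apply, hω, transvection_apply, neg_mul, neg_smul, add_neg_cancel_right]

theorem transvection_transvection (c : R) (r q p : R × R) :
    transvection c r (transvection c q p) =
      transvection c (transvection c r q) (transvection c r p) := by
  rw [transvection_apply c (transvection c r q), intersectionForm_transvection,
    transvection_apply c q, map_add, map_smul]

theorem transvection_neg_left (c : R) (q p : R × R) :
    transvection c (-q) p = transvection c q p := by
  rw [transvection_apply, transvection_apply, intersectionForm_neg_right, smul_neg, ← neg_smul,
    mul_neg, neg_neg]

theorem isCoprime_iff_exists_intersectionForm_eq_one {p : R × R} :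
    IsCoprime p.1 p.2 ↔ ∃ r, intersectionForm p r = 1 := by
  constructor
  · rintro ⟨a, b, h⟩
    exact ⟨(-b, a), by simp only [intersectionForm]; linear_combination h⟩
  · rintro ⟨r, h⟩
    exact ⟨r.2, -r.1, by simp only [intersectionForm] at h; linear_combination h⟩

theorem isCoprime_transvection {p : R × R} (hp : IsCoprime p.1 p.2) (c : R) (q : R × R) :
    IsCoprime (transvection c q p).1 (transvection c q p).2 := by
  obtain ⟨r, hr⟩ := isCoprime_iff_exists_intersectionForm_eq_one.mp hp
  exact isCoprime_iff_exists_intersectionForm_eq_one.mpr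
    ⟨transvection c q r, (intersectionForm_transvection c q p r).trans hr⟩

end Transvection

namespace CoprimePair

def transvection (c : ℤ) (q p : CoprimePair) : CoprimePair :=
  ⟨_root_.transvection c q.1 p.1, isCoprime_transvection p.2 c q.1⟩

theorem slopeRel_transvection_left (c : ℤ) {q q' : CoprimePair} (h : slopeRel q q')
    (p : CoprimePair) : slopeRel (q.transvection c p) (q'.transvection c p) := by
  refine Or.inl ?_
  rcases h with h | h
  · simp only [transvection, h]
  · simp only [transvection, h]; exact transvection_neg_left c q.1 p.1

theorem slopeRel_transvection_right (c : ℤ) (q : CoprimePair) {p p' : CoprimePair}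
    (h : slopeRel p p') : slopeRel (q.transvection c p) (q.transvection c p') := by
  rcases h with h | h
  · exact Or.inl (by simp only [transvection, h])
  · exact Or.inr (by simp only [transvection, h]; exact map_neg _ p.1)

theorem transvection_self (c : ℤ) (q : CoprimePair) : q.transvection c q = q :=
  Subtype.ext (_root_.transvection_self c q.1)

theorem transvection_neg_transvection (c : ℤ) (q p : CoprimePair) :
    q.transvection (-c) (q.transvection c p) = p :=
  Subtype.ext (_root_.transvection_neg_transvection c q.1 p.1)

theorem transvection_transvection (c : ℤ) (r q p : CoprimePair) :
    r.transvection c (q.transvection c p) =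
      (r.transvection c q).transvection c (r.transvection c p) :=
  Subtype.ext (_root_.transvection_transvection c r.1 q.1 p.1)

end CoprimePair

namespace Slope

def transvection (c : ℤ) : Slope → Slope → Slope :=
  Quot.map₂ (CoprimePair.transvection c) (fun q _ _ ↦ q.slopeRel_transvection_right c)
    (fun _ _ p h ↦ CoprimePair.slopeRel_transvection_left c h p)

theorem transvection_self (c : ℤ) (q : Slope) : transvection c q q = q := by
  induction q using Quot.ind with
  | mk q => exact congrArg (Quot.mk _) (q.transvection_self c)

theorem transvection_neg_transvection (c : ℤ) (q p : Slope) :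
    transvection (-c) q (transvection c q p) = p := by
  induction q using Quot.ind with
  | mk q =>
    induction p using Quot.ind with
    | mk p => exact congrArg (Quot.mk _) (q.transvection_neg_transvection c p)

theorem transvection_transvection (c : ℤ) (r q p : Slope) :
    transvection c r (transvection c q p) =
      transvection c (transvection c r q) (transvection c r p) := by
  induction r using Quot.ind with
  | mk r =>
    induction q using Quot.ind with
    | mk q =>
      induction p using Quot.ind with
      | mk p => exact congrArg (Quot.mk _) (r.transvection_transvection c q p)

end Slope

namespace TorusDehn

/-- `transvection 1 q p` is `p ▷ q` and `transvection (-1) q p` is `p ⊴ q`. -/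
def transvection (c : ℤ) : TorusDehn → TorusDehn → TorusDehn
  | some q, some p => some (Slope.transvection c q p)
  | none, p => p
  | some _, none => none

theorem transvection_self (c : ℤ) : ∀ q : TorusDehn, transvection c q q = q
  | some q => congrArg some (Slope.transvection_self c q)
  | none => rfl

theorem transvection_neg_transvection (c : ℤ) :
    ∀ q p : TorusDehn, transvection (-c) q (transvection c q p) = p
  | some q, some p => congrArg some (Slope.transvection_neg_transvection c q p)
  | none, _ => rfl
  | some _, none => rfl

theorem transvection_transvection (c : ℤ) : ∀ r q p : TorusDehn,
    transvection c r (transvection c q p) =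
      transvection c (transvection c r q) (transvection c r p)
  | some r, some q, some p => congrArg some (Slope.transvection_transvection c r q p)
  | none, _, _ => rfl
  | some _, none, _ => rfl
  | some _, some _, none => rfl

instance : Quandle TorusDehn where
  act := transvection 1
  self_distrib := transvection_transvection 1 _ _ _
  invAct := transvection (-1)
  left_inv q := transvection_neg_transvection 1 q
  right_inv q p := by simpa only [neg_neg] using transvection_neg_transvection (-1) q p
  fix := transvection_self 1 _

theorem eq_transvection {c : ℤ} {f : TorusDehn → TorusDehn → TorusDehn}
    (hf : ∀ p q : CoprimePair,
      f (some (Quot.mk _ p)) (some (Quot.mk _ q)) = some (Quot.mk _ (q.transvection c p)))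
    (hI : ∀ q, f none q = none ∧ f q none = q) : f = fun p q ↦ transvection c q p := by
  funext p q
  rcases p with _ | ⟨⟨p⟩⟩ <;> rcases q with _ | ⟨⟨q⟩⟩
  · exact (hI none).1
  · exact (hI _).1
  · exact (hI _).2
  · exact hf p q

end TorusDehn

theorem torus_dehn_quandle_axioms
    (tr br : TorusDehn → TorusDehn → TorusDehn)
    (htr : ∀ (u v x y : ℤ) (hu : IsCoprime u v) (hx : IsCoprime x y)
      (h' : IsCoprime (u + u * x * y - v * x ^ 2) (v - v * x * y + u * y ^ 2)),
      tr (some (Quot.mk _ ⟨(u, v), hu⟩)) (some (Quot.mk _ ⟨(x, y), hx⟩)) =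
        some (Quot.mk _ ⟨(u + u * x * y - v * x ^ 2, v - v * x * y + u * y ^ 2), h'⟩))
    (hbr : ∀ (u v x y : ℤ) (hu : IsCoprime u v) (hx : IsCoprime x y)
      (h' : IsCoprime (u - u * x * y + v * x ^ 2) (v + v * x * y - u * y ^ 2)),
      br (some (Quot.mk _ ⟨(u, v), hu⟩)) (some (Quot.mk _ ⟨(x, y), hx⟩)) =
        some (Quot.mk _ ⟨(u - u * x * y + v * x ^ 2, v + v * x * y - u * y ^ 2), h'⟩))
    (htrI : ∀ q : TorusDehn, tr none q = none ∧ tr q none = q)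
    (hbrI : ∀ q : TorusDehn, br none q = none ∧ br q none = q) :
    (∀ q : TorusDehn, tr q q = q) ∧
    (∀ q r : TorusDehn, br (tr q r) r = q ∧ tr (br q r) r = q) ∧
    (∀ q r s : TorusDehn, tr (tr q r) s = tr (tr q s) (tr r s)) := by
  have htr' : ∀ p q : CoprimePair, tr (some (Quot.mk _ p)) (some (Quot.mk _ q)) =
      some (Quot.mk _ (q.transvection 1 p)) := by
    rintro ⟨⟨u, v⟩, hu⟩ ⟨⟨x, y⟩, hx⟩
    have hval : (CoprimePair.transvection 1 ⟨(x, y), hx⟩ ⟨(u, v), hu⟩).1 =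
        (u + u * x * y - v * x ^ 2, v - v * x * y + u * y ^ 2) :=
      (transvection_mk 1 u v x y).trans (by ring_nf)
    obtain ⟨h', hr⟩ := Subtype.coe_eq_iff.mp hval
    rw [hr, htr u v x y hu hx h']
  have hbr' : ∀ p q : CoprimePair, br (some (Quot.mk _ p)) (some (Quot.mk _ q)) =
      some (Quot.mk _ (q.transvection (-1) p)) := by
    rintro ⟨⟨u, v⟩, hu⟩ ⟨⟨x, y⟩, hx⟩
    have hval : (CoprimePair.transvection (-1) ⟨(x, y), hx⟩ ⟨(u, v), hu⟩).1 =
        (u - u * x * y + v * x ^ 2, v + v * x * y - u * y ^ 2) :=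
      (transvection_mk (-1) u v x y).trans (by ring_nf)
    obtain ⟨h', hr⟩ := Subtype.coe_eq_iff.mp hval
    rw [hr, hbr u v x y hu hx h']
  obtain rfl : tr = fun p q ↦ q ◃ p := TorusDehn.eq_transvection htr' htrI
  obtain rfl : br = fun p q ↦ q ◃⁻¹ p := TorusDehn.eq_transvection hbr' hbrI
  exact ⟨fun q ↦ Quandle.fix, fun q r ↦ ⟨Rack.left_inv r q, Rack.right_inv r q⟩,
    fun q r s ↦ Shelf.self_distrib⟩
end
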